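/- Let q be a prime, F = ℤ/qℤ, and let A be a subset of F* = F \ {0} with |A| > 1. Define H := {s ∈ F : the number of pairs (a,b) ∈ A×A with s = a/b is at least |A|²/(5|A·A|)}, and let G be the multiplicative subgroup of F* generated by H. Suppose there exists g ∈ G with |S_g(A)| = |A|². Then there exists ξ ∈ G with |A|³/(5|A·A|) ≤ |S_ξ(A)| < |A|². -/

import Mathlib

open scoped Pointwise

/-- `S_ξ(A) = {a + bξ : a, b ∈ A}`. -/
def Sset {q : ℕ} (A : Finset (ZMod q)) (ξ : ZMod q) : Finset (ZMod q) :=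
  (A ×ˢ A).image fun p => p.1 + p.2 * ξ

/-- `H = {s ∈ F : #{(a,b) ∈ A×A : s = a/b} ≥ |A|²/(5|A·A|)}`. For `b ≠ 0`,
`s = a/b` is expressed as `a = s * b`. -/
def Hset {q : ℕ} (A : Finset (ZMod q)) : Set (ZMod q) :=
  {s | (A.card : ℝ) ^ 2 / (5 * ((A * A).card : ℝ))
    ≤ (((A ×ˢ A).filter fun p => p.1 = s * p.2).card : ℝ)}

/-- `G`, the multiplicative subgroup of `F*` generated by `H`. -/
def Ggen {q : ℕ} (A : Finset (ZMod q)) : Subgroup (ZMod q)ˣ :=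
  Subgroup.closure {u : (ZMod q)ˣ | (u : ZMod q) ∈ Hset A}

lemma Sset_card_le {q : ℕ} (A : Finset (ZMod q)) (ξ : ZMod q) :
    (Sset A ξ).card ≤ A.card ^ 2 := by
  calc (Sset A ξ).card ≤ (A ×ˢ A).card := Finset.card_image_le
  _ = A.card ^ 2 := by rw [Finset.card_product, sq]

lemma Sset_one_lt {q : ℕ} (A : Finset (ZMod q)) (hA1 : 1 < A.card) :
    (Sset A 1).card < A.card ^ 2 := by
  rcases Finset.one_lt_card.mp hA1 with ⟨a, ha, b, hb, hab⟩
  rcases lt_or_eq_of_le (Sset_card_le A 1) with h | h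
  · exact h
  exfalso
  have hinj : Set.InjOn (fun p : ZMod q × ZMod q => p.1 + p.2 * 1)
      ((A ×ˢ A : Finset _) : Set _) :=
    Finset.card_image_iff.mp (by rw [show ((A ×ˢ A).image fun p : ZMod q × ZMod q
      => p.1 + p.2 * 1) = Sset A 1 from rfl, h, Finset.card_product, sq])
  have h1 : ((a, b) : ZMod q × ZMod q) ∈ (A ×ˢ A : Finset _) := Finset.mem_product.mpr ⟨ha, hb⟩
  have h2 : ((b, a) : ZMod q × ZMod q) ∈ (A ×ˢ A : Finset _) := Finset.mem_product.mpr ⟨hb, ha⟩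
  have := hinj (Finset.mem_coe.mpr h1) (Finset.mem_coe.mpr h2) (by simp [add_comm])
  exact hab (congrArg Prod.fst this)

/-- Symmetry of the ratio count. -/
lemma ratio_count_symm {q : ℕ} (A : Finset (ZMod q)) (s : (ZMod q)ˣ) :
    ((A ×ˢ A).filter fun p => p.1 = ((s⁻¹ : (ZMod q)ˣ) : ZMod q) * p.2).card
      = ((A ×ˢ A).filter fun p => p.1 = (s : ZMod q) * p.2).card := by
  apply Finset.card_bij (fun p _ => Prod.swap p)
  · rintro ⟨x, y⟩ hp
    simp only [Finset.mem_filter, Finset.mem_product] at hp ⊢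
    obtain ⟨⟨hx, hy⟩, he⟩ := hp
    refine ⟨⟨hy, hx⟩, ?_⟩
    rw [he]
    simp [mul_assoc, ← Units.val_mul]
  · rintro ⟨x, y⟩ _ ⟨x', y'⟩ _ h
    simpa [Prod.ext_iff, and_comm] using h
  · rintro ⟨x, y⟩ hp
    simp only [Finset.mem_filter, Finset.mem_product] at hp
    obtain ⟨⟨hx, hy⟩, he⟩ := hp
    refine ⟨(y, x), ?_, rfl⟩
    simp only [Finset.mem_filter, Finset.mem_product]
    refine ⟨⟨hy, hx⟩, ?_⟩
    rw [he]
    simp [mul_assoc, ← Units.val_mul]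

/-- Key lemma: if the map at `s*ξ` is injective then `|A| * r(s⁻¹) ≤ |S_ξ|`. -/
lemma key_lemma {q : ℕ} (A : Finset (ZMod q)) (s ξ : (ZMod q)ˣ)
    (hinj : (Sset A ((s * ξ : (ZMod q)ˣ) : ZMod q)).card = A.card ^ 2) :
    A.card * ((A ×ˢ A).filter fun p => p.1 = ((s⁻¹ : (ZMod q)ˣ) : ZMod q) * p.2).card
      ≤ (Sset A (ξ : ZMod q)).card := by
  set c : ZMod q := ((s⁻¹ : (ZMod q)ˣ) : ZMod q) with hc
  have hInj : Set.InjOn (fun p : ZMod q × ZMod q => p.1 + p.2 * ((s * ξ : (ZMod q)ˣ) : ZMod q))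
      ((A ×ˢ A : Finset _) : Set _) :=
    Finset.card_image_iff.mp (by
      rw [show ((A ×ˢ A).image fun p : ZMod q × ZMod q =>
        p.1 + p.2 * ((s * ξ : (ZMod q)ˣ) : ZMod q)) = Sset A _ from rfl, hinj,
        Finset.card_product, sq])
  have hsc : (s : ZMod q) * c = 1 := by rw [hc, ← Units.val_mul, mul_inv_cancel, Units.val_one]
  -- count via the fiber set N
  have hNcard : ((A ×ˢ A).filter fun p => p.1 = c * p.2).card
      = (A.filter fun b => c * b ∈ A).card := by
    apply Finset.card_bij (fun p _ => p.2)
    · rintro ⟨x, y⟩ hp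
      simp only [Finset.mem_filter, Finset.mem_product] at hp ⊢
      exact ⟨hp.1.2, hp.2 ▸ hp.1.1⟩
    · rintro ⟨x, y⟩ hp ⟨x', y'⟩ hp' h
      simp only [Finset.mem_filter, Finset.mem_product] at hp hp'
      simp only at h
      exact Prod.ext (by rw [hp.2, hp'.2, h]) h
    · intro b hb
      simp only [Finset.mem_filter] at hb
      exact ⟨(c * b, b), Finset.mem_filter.mpr ⟨Finset.mem_product.mpr ⟨hb.2, hb.1⟩, rfl⟩, rfl⟩
  rw [hNcard, ← Finset.card_product]
  apply Finset.card_le_card_of_injOn (fun p => p.1 + p.2 * (ξ : ZMod q))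
  · rintro ⟨x, y⟩ hp
    simp only [Finset.mem_coe, Finset.mem_product, Finset.mem_filter] at hp
    exact Finset.mem_image.mpr ⟨(x, y), Finset.mem_product.mpr ⟨hp.1, hp.2.1⟩, rfl⟩
  · rintro ⟨x, y⟩ hp ⟨x', y'⟩ hp' h
    simp only [Finset.coe_product, Set.mem_prod, Finset.mem_coe, Finset.mem_filter] at hp hp'
    simp only at h
    have hy : y = (s : ZMod q) * (c * y) := by rw [← mul_assoc, hsc, one_mul]
    have hy' : y' = (s : ZMod q) * (c * y') := by rw [← mul_assoc, hsc, one_mul]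
    have h1 : ((x, c * y) : ZMod q × ZMod q) ∈ ((A ×ˢ A : Finset _) : Set (ZMod q × ZMod q)) := by
      simp only [Finset.coe_product, Set.mem_prod, Finset.mem_coe]
      exact ⟨hp.1, hp.2.2⟩
    have h2 : ((x', c * y') : ZMod q × ZMod q) ∈ ((A ×ˢ A : Finset _) : Set (ZMod q × ZMod q)) := by
      simp only [Finset.coe_product, Set.mem_prod, Finset.mem_coe]
      exact ⟨hp'.1, hp'.2.2⟩
    have heq := hInj h1 h2 (by
      simp only [Units.val_mul]
      rw [show c * y * ((s : ZMod q) * (ξ : ZMod q)) = ((s : ZMod q) * (c * y)) * (ξ : ZMod q)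
        by ring, ← hy,
        show c * y' * ((s : ZMod q) * (ξ : ZMod q)) = ((s : ZMod q) * (c * y')) * (ξ : ZMod q)
        by ring, ← hy']
      exact h)
    have e1 : x = x' := congrArg Prod.fst heq
    have e2 : c * y = c * y' := congrArg Prod.snd heq
    have e3 : y = y' := by rw [hy, hy', e2]
    exact Prod.ext e1 e3

/-- **Case 1 of Lemma 4 (Konyagin).** Let `A ⊆ F*` with `|A| > 1`. If some `g ∈ G`
has `|S_g(A)| = |A|²`, then there is `ξ ∈ G` with
`|A|³/(5|A·A|) ≤ |S_ξ(A)| < |A|²`. -/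
theorem exists_xi_of_exists_injective_g (q : ℕ) (hq : q.Prime) (A : Finset (ZMod q))
    (hA0 : (0 : ZMod q) ∉ A) (hA1 : 1 < A.card)
    (hex : ∃ g : (ZMod q)ˣ, g ∈ Ggen A ∧ (Sset A (g : ZMod q)).card = A.card ^ 2) :
    ∃ ξ : (ZMod q)ˣ, ξ ∈ Ggen A ∧
      (A.card : ℝ) ^ 3 / (5 * ((A * A).card : ℝ)) ≤ ((Sset A (ξ : ZMod q)).card : ℝ) ∧
      (Sset A (ξ : ZMod q)).card < A.card ^ 2 := by
  obtain ⟨g, hgG, hgcard⟩ := hex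
  set Goal := ∃ ξ : (ZMod q)ˣ, ξ ∈ Ggen A ∧
      (A.card : ℝ) ^ 3 / (5 * ((A * A).card : ℝ)) ≤ ((Sset A (ξ : ZMod q)).card : ℝ) ∧
      (Sset A (ξ : ZMod q)).card < A.card ^ 2 with hGoal
  set small : (ZMod q)ˣ → Prop := fun x => (Sset A (x : ZMod q)).card < A.card ^ 2 with hsmall
  -- a step lemma: being in H and hitting a non-small product from a small x yields Goal
  have step : ∀ s x : (ZMod q)ˣ, (s : ZMod q) ∈ Hset A → x ∈ Ggen A → small x →
      ¬ small (s * x) → Goal := by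
    intro s x hsH hxG hxs hns
    have hcard : (Sset A ((s * x : (ZMod q)ˣ) : ZMod q)).card = A.card ^ 2 :=
      le_antisymm (Sset_card_le A _) (not_lt.mp hns)
    have hkey := key_lemma A s x hcard
    rw [ratio_count_symm] at hkey
    refine ⟨x, hxG, ?_, hxs⟩
    have hAA : (0 : ℝ) < 5 * ((A * A).card : ℝ) := by
      have : (A * A).Nonempty := by
        have : A.Nonempty := Finset.card_pos.mp (by omega)
        exact this.mul this
      have := Finset.card_pos.mpr this
      positivity
    have hH : (A.card : ℝ) ^ 2 / (5 * ((A * A).card : ℝ))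
        ≤ (((A ×ˢ A).filter fun p => p.1 = (s : ZMod q) * p.2).card : ℝ) := hsH
    have hA0' : (0 : ℝ) ≤ (A.card : ℝ) := Nat.cast_nonneg _
    calc (A.card : ℝ) ^ 3 / (5 * ((A * A).card : ℝ))
        = (A.card : ℝ) * ((A.card : ℝ) ^ 2 / (5 * ((A * A).card : ℝ))) := by ring
      _ ≤ (A.card : ℝ) * (((A ×ˢ A).filter fun p => p.1 = (s : ZMod q) * p.2).card : ℝ) :=
          mul_le_mul_of_nonneg_left hH hA0'
      _ ≤ ((Sset A (x : ZMod q)).card : ℝ) := by exact_mod_cast hkey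
  have step' : ∀ s x : (ZMod q)ˣ, (s : ZMod q) ∈ Hset A → x ∈ Ggen A → small x →
      ¬ small (s⁻¹ * x) → Goal := by
    intro s x hsH hxG hxs hns
    have hcard : (Sset A ((s⁻¹ * x : (ZMod q)ˣ) : ZMod q)).card = A.card ^ 2 :=
      le_antisymm (Sset_card_le A _) (not_lt.mp hns)
    have hkey := key_lemma A s⁻¹ x hcard
    rw [inv_inv] at hkey
    refine ⟨x, hxG, ?_, hxs⟩
    have hH : (A.card : ℝ) ^ 2 / (5 * ((A * A).card : ℝ))
        ≤ (((A ×ˢ A).filter fun p => p.1 = (s : ZMod q) * p.2).card : ℝ) := hsH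
    have hA0' : (0 : ℝ) ≤ (A.card : ℝ) := Nat.cast_nonneg _
    calc (A.card : ℝ) ^ 3 / (5 * ((A * A).card : ℝ))
        = (A.card : ℝ) * ((A.card : ℝ) ^ 2 / (5 * ((A * A).card : ℝ))) := by ring
      _ ≤ (A.card : ℝ) * (((A ×ˢ A).filter fun p => p.1 = (s : ZMod q) * p.2).card : ℝ) :=
          mul_le_mul_of_nonneg_left hH hA0'
      _ ≤ ((Sset A (x : ZMod q)).card : ℝ) := by exact_mod_cast hkey
  -- closure induction
  have main : ∀ g : (ZMod q)ˣ, g ∈ Ggen A →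
      (Goal ∨ ((∀ x ∈ Ggen A, small x → small (g * x)) ∧
               (∀ x ∈ Ggen A, small x → small (g⁻¹ * x)))) := by
    intro g hg
    refine Subgroup.closure_induction (k := {u : (ZMod q)ˣ | (u : ZMod q) ∈ Hset A})
      (p := fun g _ => Goal ∨ ((∀ x ∈ Ggen A, small x → small (g * x)) ∧
               (∀ x ∈ Ggen A, small x → small (g⁻¹ * x)))) ?_ ?_ ?_ ?_ hg
    · intro s hs
      by_cases h1 : ∀ x ∈ Ggen A, small x → small (s * x)
      · by_cases h2 : ∀ x ∈ Ggen A, small x → small (s⁻¹ * x)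
        · exact Or.inr ⟨h1, h2⟩
        · push_neg at h2
          obtain ⟨x, hxG, hxs, hns⟩ := h2
          exact Or.inl (step' s x hs hxG hxs hns)
      · push_neg at h1
        obtain ⟨x, hxG, hxs, hns⟩ := h1
        exact Or.inl (step s x hs hxG hxs hns)
    · exact Or.inr ⟨fun x _ hx => by rwa [one_mul], fun x _ hx => by rwa [inv_one, one_mul]⟩
    · rintro a b haG hbG (hGa | ⟨ha1, ha2⟩)
      · exact fun _ => Or.inl hGa
      rintro (hGb | ⟨hb1, hb2⟩)
      · exact Or.inl hGb
      refine Or.inr ⟨fun x hxG hx => ?_, fun x hxG hx => ?_⟩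
      · rw [mul_assoc]
        exact ha1 (b * x) (mul_mem hbG hxG) (hb1 x hxG hx)
      · rw [mul_inv_rev, mul_assoc]
        exact hb2 (a⁻¹ * x) (mul_mem (inv_mem haG) hxG) (ha2 x hxG hx)
    · rintro a haG (hGa | ⟨ha1, ha2⟩)
      · exact Or.inl hGa
      · exact Or.inr ⟨ha2, by rwa [inv_inv]⟩
  rcases main g hgG with hGoal' | ⟨h1, _⟩
  · exact hGoal'
  · exfalso
    have hone : small 1 := by
      show (Sset A ((1 : (ZMod q)ˣ) : ZMod q)).card < A.card ^ 2
      rw [Units.val_one]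
      exact Sset_one_lt A hA1
    have := h1 1 (one_mem _) hone
    rw [mul_one] at this
    exact absurd hgcard (Nat.ne_of_lt this)
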